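/- One has inf{ |log f(R e^{iθ})| : θ ∈ [0, π/2] } → ∞ as R → ∞; that is, the infimum over the quarter circle of the modulus of log f tends to infinity with the radius. -/

import Mathlib

/-!
Write `log f(z) = r Log z + a z² + b z + ∑ₖ φ(z / λₖ)` with `φ(w) = Log(1 + w) - w + w² / 2`, and
put `z = R u` with `|u| = 1`, `Re u ≥ 0`. After rotating by `u⁻²`, the function
`t ↦ Re (φ(t u) / u²)` vanishes at `0` and has derivative `t² (Re u + t) / |1 + t u|²`, which is
both `≥ 0` and `≥ t - 2`. So every term of the series has non-negative real part, and the terms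
with `8 λₖ ≤ R` contribute at least `R² / (4 λₖ²)`. As `∑ 1 / λₖ²` diverges, finitely many of them
already beat `a R²`, while `r Log z + b z = O(R)`; hence `|log f(R u)| ≥ Re (log f(R u) / u²) ≥ R`
for large `R`, uniformly in `u`.
-/

open Complex Filter

/-- The holomorphic branch of `log f` on `ℂ ∖ (−∞,0]`:
`log f(z) = r·Log z + az² + bz + ∑_k (Log(1 + z/λ_k) − z/λ_k + z²/(2λ_k²))`. -/
noncomputable def genus2log (r : ℕ) (a b : ℝ) (lam : ℕ → ℝ) (z : ℂ) : ℂ :=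
  (r : ℂ) * Complex.log z + (a : ℂ) * z ^ 2 + (b : ℂ) * z +
    ∑' k : ℕ, (Complex.log (1 + z / (lam k : ℂ)) - z / (lam k : ℂ) +
      z ^ 2 / (2 * (lam k : ℂ) ^ 2))

theorem le_of_hasDerivAt_le_of_nonneg {f g f' g' : ℝ → ℝ} (h0 : g 0 ≤ f 0)
    (hf : ∀ s, 0 ≤ s → HasDerivAt f (f' s) s) (hg : ∀ s, 0 ≤ s → HasDerivAt g (g' s) s)
    (hle : ∀ s, 0 ≤ s → g' s ≤ f' s) {t : ℝ} (ht : 0 ≤ t) : g t ≤ f t :=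
  image_le_of_deriv_right_le_deriv_boundary
    (fun s hs => (hg s hs.1).continuousAt.continuousWithinAt)
    (fun s hs => (hg s hs.1).hasDerivWithinAt) h0
    (fun s hs => (hf s hs.1).continuousAt.continuousWithinAt)
    (fun s hs => (hf s hs.1).hasDerivWithinAt) (fun s hs => hle s hs.1) ⟨ht, le_rfl⟩

noncomputable def logPrimaryFactor (w : ℂ) : ℂ := log (1 + w) - w + w ^ 2 / 2

theorem logPrimaryFactor_zero : logPrimaryFactor 0 = 0 := by simp [logPrimaryFactor]

theorem norm_logPrimaryFactor_le {w : ℂ} (hw : ‖w‖ ≤ 1 / 2) :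
    ‖logPrimaryFactor w‖ ≤ ‖w‖ ^ 3 := by
  have hTaylor : logTaylor 3 w = w - w ^ 2 / 2 := by
    simp [logTaylor_succ, logTaylor_zero]
    ring
  have hrem := norm_log_sub_logTaylor_le 2 (hw.trans_lt (by norm_num))
  rw [hTaylor] at hrem
  have hinv : (1 - ‖w‖)⁻¹ ≤ 2 := by
    rw [inv_le_comm₀ (by linarith) (by norm_num)]
    linarith
  calc ‖logPrimaryFactor w‖ = ‖log (1 + w) - (w - w ^ 2 / 2)‖ := by
        rw [logPrimaryFactor, sub_add]
    _ ≤ ‖w‖ ^ 3 * (1 - ‖w‖)⁻¹ / 3 := hrem.trans_eq (by norm_num)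
    _ ≤ ‖w‖ ^ 3 * 2 / 3 := by gcongr
    _ ≤ ‖w‖ ^ 3 := by linarith [pow_nonneg (norm_nonneg w) 3]

theorem tendsto_atTop_of_summable_one_div_pow {lam : ℕ → ℝ} (hpos : ∀ k, 0 < lam k) {n : ℕ}
    (hsum : Summable fun k => 1 / lam k ^ n) : Tendsto lam atTop atTop := by
  refine tendsto_atTop.2 fun B => ?_
  have hB : (0 : ℝ) < 1 / max B 1 ^ n := by positivity
  filter_upwards [hsum.tendsto_atTop_zero.eventually (gt_mem_nhds hB)] with k hk
  rw [one_div_lt_one_div (pow_pos (hpos k) n) (by positivity)] at hk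
  exact (le_max_left B 1).trans (lt_of_pow_lt_pow_left₀ n (hpos k).le hk).le

theorem summable_logPrimaryFactor_div {lam : ℕ → ℝ} (hpos : ∀ k, 0 < lam k)
    (hsum : Summable fun k => 1 / lam k ^ 3) (z : ℂ) :
    Summable fun k => logPrimaryFactor (z / lam k) := by
  refine .of_norm_bounded_eventually_nat (hsum.mul_left (‖z‖ ^ 3)) ?_
  filter_upwards [(tendsto_atTop_of_summable_one_div_pow hpos hsum).eventually_ge_atTop
    (2 * ‖z‖)] with k hk
  have hnorm : ‖z / lam k‖ = ‖z‖ / lam k := by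
    rw [norm_div, norm_real, Real.norm_of_nonneg (hpos k).le]
  have hsmall : ‖z / lam k‖ ≤ 1 / 2 := by
    rw [hnorm, div_le_iff₀ (hpos k)]
    linarith
  calc ‖logPrimaryFactor (z / lam k)‖ ≤ ‖z / lam k‖ ^ 3 := norm_logPrimaryFactor_le hsmall
    _ = ‖z‖ ^ 3 * (1 / lam k ^ 3) := by rw [hnorm]; ring

theorem genus2log_eq (r : ℕ) (a b : ℝ) (lam : ℕ → ℝ) (z : ℂ) :
    genus2log r a b lam z =
      r * log z + a * z ^ 2 + b * z + ∑' k, logPrimaryFactor (z / lam k) := by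
  simp only [genus2log, logPrimaryFactor, div_pow]
  ring_nf

section RightHalfPlane

variable {u : ℂ} (hu : ‖u‖ = 1) (hre : 0 ≤ u.re)
include hre

theorem one_add_ofReal_mul_mem_slitPlane {s : ℝ} (hs : 0 ≤ s) : 1 + s * u ∈ slitPlane := by
  refine mem_slitPlane_iff.2 (Or.inl ?_)
  simp only [add_re, one_re, re_ofReal_mul]
  positivity

include hu

theorem hasDerivAt_re_logPrimaryFactor_ofReal_mul {s : ℝ} (hs : 0 ≤ s) :
    HasDerivAt (fun t : ℝ => (logPrimaryFactor (t * u) / u ^ 2).re)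
      (s ^ 2 * (u.re + s) / normSq (1 + s * u)) s := by
  have hmem := one_add_ofReal_mul_mem_slitPlane hre hs
  have hne : 1 + s * u ≠ 0 := slitPlane_ne_zero hmem
  have hu0 : u ≠ 0 := norm_ne_zero_iff.1 (hu ▸ one_ne_zero)
  have hderiv : HasDerivAt (fun ζ : ℂ => logPrimaryFactor (ζ * u) / u ^ 2)
      (s ^ 2 * u / (1 + s * u)) s := by
    have hlog : HasDerivAt (fun ζ : ℂ => log (1 + ζ * u)) (u / (1 + s * u)) s := by
      simpa using ((hasDerivAt_mul_const u).const_add 1).clog hmem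
    have hsq : HasDerivAt (fun ζ : ℂ => (ζ * u) ^ 2 / 2) (s * u ^ 2) s := by
      refine (((hasDerivAt_mul_const u).fun_pow 2).div_const 2).congr_deriv ?_
      push_cast
      ring
    refine (((hlog.sub (hasDerivAt_mul_const u)).add hsq).div_const (u ^ 2)).congr_deriv ?_
    rw [div_eq_div_iff (pow_ne_zero 2 hu0) hne, div_sub' hne, div_add' _ _ _ hne,
      div_mul_eq_mul_div, div_eq_iff hne]
    ring
  have hunit : u.re * u.re + u.im * u.im = 1 := by
    rw [← normSq_apply, normSq_eq_norm_sq, hu, one_pow]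
  have hN : normSq (1 + s * u) ≠ 0 := (normSq_pos.2 hne).ne'
  convert hderiv.real_of_complex using 1
  simp only [div_re, ← ofReal_pow, re_ofReal_mul, im_ofReal_mul, add_re, add_im, one_re, one_im]
  field_simp
  linear_combination -s ^ 3 * hunit

theorem re_logPrimaryFactor_ofReal_mul_div_sq_nonneg {t : ℝ} (ht : 0 ≤ t) :
    0 ≤ (logPrimaryFactor (t * u) / u ^ 2).re :=
  le_of_hasDerivAt_le_of_nonneg (g := fun _ => 0) (g' := fun _ => 0)
    (by simp [logPrimaryFactor_zero])
    (fun _ hs => hasDerivAt_re_logPrimaryFactor_ofReal_mul hu hre hs)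
    (fun s _ => hasDerivAt_const s 0)
    (fun s hs => div_nonneg (mul_nonneg (sq_nonneg s) (add_nonneg hre hs)) (normSq_nonneg _)) ht

theorem sub_le_re_logPrimaryFactor_ofReal_mul_div_sq {t : ℝ} (ht : 0 ≤ t) :
    t ^ 2 / 2 - 2 * t ≤ (logPrimaryFactor (t * u) / u ^ 2).re := by
  refine le_of_hasDerivAt_le_of_nonneg (g := fun s => s ^ 2 / 2 - 2 * s) (g' := fun s => s - 2)
    (by simp [logPrimaryFactor_zero])
    (fun _ hs => hasDerivAt_re_logPrimaryFactor_ofReal_mul hu hre hs) (fun s _ => ?_)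
    (fun s hs => ?_) ht
  · exact (((hasDerivAt_pow 2 s).div_const 2).sub ((hasDerivAt_id s).const_mul 2)).congr_deriv
      (by simp)
  · have hre1 : u.re ≤ 1 := hu ▸ re_le_norm u
    have hunit : u.re * u.re + u.im * u.im = 1 := by
      rw [← normSq_apply, normSq_eq_norm_sq, hu, one_pow]
    have hN : normSq (1 + s * u) = 1 + 2 * s * u.re + s ^ 2 := by
      simp only [normSq_apply, add_re, add_im, one_re, one_im, re_ofReal_mul, im_ofReal_mul]
      linear_combination s ^ 2 * hunit
    have hpos := normSq_pos.2 (slitPlane_ne_zero (one_add_ofReal_mul_mem_slitPlane hre hs))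
    rw [le_div_iff₀ hpos, hN]
    nlinarith [mul_nonneg hs hre, mul_nonneg (mul_nonneg hs hs) (sub_nonneg.2 hre1)]

end RightHalfPlane

theorem norm_log_le_norm_add_pi {z : ℂ} (hz : 1 ≤ ‖z‖) : ‖log z‖ ≤ ‖z‖ + Real.pi := by
  refine (norm_le_abs_re_add_abs_im _).trans ?_
  rw [log_re, log_im, abs_of_nonneg (Real.log_nonneg hz)]
  gcongr
  · exact Real.log_le_self (norm_nonneg z)
  · exact abs_arg_le_pi z

section Genus2log

variable {lam : ℕ → ℝ} {u : ℂ} (hu : ‖u‖ = 1)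
include hu

theorem sub_le_re_polynomial_part_div_sq (r : ℕ) (a b : ℝ) {R : ℝ} (hR : 1 ≤ R) :
    a * R ^ 2 - |b| * R - r * (R + Real.pi) ≤
      ((r * log (R * u) + a * (R * u) ^ 2 + b * (R * u)) / u ^ 2).re := by
  have hu0 : u ≠ 0 := norm_ne_zero_iff.1 (hu ▸ one_ne_zero)
  have hnorm : ‖(R : ℂ) * u‖ = R := by
    rw [norm_mul, hu, norm_real, Real.norm_of_nonneg (by linarith), mul_one]
  have hquad : a * ((R : ℂ) * u) ^ 2 / u ^ 2 = (a * R ^ 2 : ℝ) := by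
    push_cast
    field_simp
  have hlin : ‖b * ((R : ℂ) * u) / u ^ 2‖ = |b| * R := by
    rw [norm_div, norm_mul, hnorm, norm_pow, hu, norm_real, Real.norm_eq_abs]
    ring
  have hlog : ‖r * log (R * u) / u ^ 2‖ ≤ r * (R + Real.pi) := by
    rw [norm_div, norm_mul, norm_pow, hu, one_pow, div_one, norm_natCast]
    have h := norm_log_le_norm_add_pi (hnorm.symm ▸ hR)
    rw [hnorm] at h
    exact mul_le_mul_of_nonneg_left h r.cast_nonneg
  have hre_ge (z : ℂ) : -‖z‖ ≤ z.re := (abs_le.1 (abs_re_le_norm z)).1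
  rw [add_div, add_div, add_re, add_re, hquad, ofReal_re]
  linarith [hre_ge (r * log (R * u) / u ^ 2), hre_ge (b * ((R : ℂ) * u) / u ^ 2)]

variable (hre : 0 ≤ u.re)
include hre

theorem mul_sum_le_re_tsum_logPrimaryFactor_div_sq (hpos : ∀ k, 0 < lam k)
    (hsum : Summable fun k => 1 / lam k ^ 3) {R : ℝ} (hR : 0 ≤ R) {S : Finset ℕ}
    (hS : ∀ k ∈ S, 8 * lam k ≤ R) :
    R ^ 2 / 4 * ∑ k ∈ S, 1 / lam k ^ 2 ≤
      ((∑' k, logPrimaryFactor (R * u / lam k)) / u ^ 2).re := by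
  have hterm (k : ℕ) : logPrimaryFactor (R * u / lam k) / u ^ 2 =
      logPrimaryFactor ((R / lam k : ℝ) * u) / u ^ 2 := by
    push_cast
    ring_nf
  have hsumm : Summable fun k => logPrimaryFactor (R * u / lam k) / u ^ 2 :=
    (summable_logPrimaryFactor_div hpos hsum _).div_const _
  rw [← tsum_div_const, re_tsum hsumm]
  calc R ^ 2 / 4 * ∑ k ∈ S, 1 / lam k ^ 2 = ∑ k ∈ S, (R / lam k) ^ 2 / 4 := by
        rw [Finset.mul_sum]
        refine Finset.sum_congr rfl fun k _ => ?_
        field_simp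
    _ ≤ ∑ k ∈ S, (logPrimaryFactor (R * u / lam k) / u ^ 2).re := by
        refine Finset.sum_le_sum fun k hk => ?_
        have ht : 8 ≤ R / lam k := (le_div_iff₀ (hpos k)).2 (by linarith [hS k hk])
        have hlow := sub_le_re_logPrimaryFactor_ofReal_mul_div_sq hu hre (by linarith : 0 ≤ R / lam k)
        rw [hterm]
        nlinarith
    _ ≤ ∑' k, (logPrimaryFactor (R * u / lam k) / u ^ 2).re :=
        (reCLM.summable hsumm).sum_le_tsum S fun k _ => hterm k ▸
          re_logPrimaryFactor_ofReal_mul_div_sq_nonneg hu hre (div_nonneg hR (hpos k).le)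

theorem le_norm_genus2log (r : ℕ) (a b : ℝ) (hpos : ∀ k, 0 < lam k)
    (hsum : Summable fun k => 1 / lam k ^ 3) {R : ℝ} (hR : 1 ≤ R) {S : Finset ℕ}
    (hS : ∀ k ∈ S, 8 * lam k ≤ R) :
    a * R ^ 2 - |b| * R - r * (R + Real.pi) + R ^ 2 / 4 * ∑ k ∈ S, 1 / lam k ^ 2 ≤
      ‖genus2log r a b lam (R * u)‖ :=
  calc _ ≤ (genus2log r a b lam (R * u) / u ^ 2).re := by
        rw [genus2log_eq, add_div _ (∑' k, _), add_re]
        exact add_le_add (sub_le_re_polynomial_part_div_sq hu r a b hR)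
          (mul_sum_le_re_tsum_logPrimaryFactor_div_sq hu hre hpos hsum (by linarith) hS)
    _ ≤ ‖genus2log r a b lam (R * u) / u ^ 2‖ := re_le_norm _
    _ = ‖genus2log r a b lam (R * u)‖ := by rw [norm_div, norm_pow, hu, one_pow, div_one]

end Genus2log

theorem genus2log_inf_quarter_circle_tendsto_general (r : ℕ) (a b : ℝ) (lam : ℕ → ℝ)
    (hpos : ∀ k, 0 < lam k)
    (hdiv : ¬ Summable (fun k => 1 / lam k ^ 2))
    (hsum : Summable (fun k => 1 / lam k ^ 3)) :
    Tendsto (fun R : ℝ =>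
        ⨅ θ : Set.Icc (0 : ℝ) (Real.pi / 2),
          ‖genus2log r a b lam ((R : ℂ) * Complex.exp ((θ : ℝ) * I))‖)
      atTop atTop := by
  have : Nonempty (Set.Icc (0 : ℝ) (Real.pi / 2)) := ⟨⟨0, le_rfl, by positivity⟩⟩
  obtain ⟨N, hN⟩ : ∃ N, 4 * (|a| + 1) ≤ ∑ k ∈ Finset.range N, 1 / lam k ^ 2 :=
    ((not_summable_iff_tendsto_nat_atTop_of_nonneg fun k => by positivity).1 hdiv
      |>.eventually_ge_atTop _).exists
  have hlarge : ∀ᶠ R in atTop, 1 ≤ R ∧ (∀ k ∈ Finset.range N, 8 * lam k ≤ R) ∧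
      |b| + r + r * Real.pi + 1 ≤ R :=
    (eventually_ge_atTop 1).and <| ((eventually_all_finset _).2 fun k _ =>
      eventually_ge_atTop _).and (eventually_ge_atTop _)
  refine tendsto_atTop_mono' atTop ?_ tendsto_id
  filter_upwards [hlarge] with R ⟨hR1, hS, hRb⟩
  refine le_ciInf fun θ => show R ≤ _ from ?_
  have hre : 0 ≤ (exp ((θ : ℝ) * I)).re := by
    rw [exp_ofReal_mul_I_re]
    exact Real.cos_nonneg_of_mem_Icc ⟨by linarith [Real.pi_pos, θ.2.1], θ.2.2⟩
  have hbound := le_norm_genus2log (norm_exp_ofReal_mul_I _) hre r a b hpos hsum hR1 hS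
  have hsumN := mul_le_mul_of_nonneg_left hN (by positivity : 0 ≤ R ^ 2 / 4)
  nlinarith [mul_le_mul_of_nonneg_right (neg_abs_le a) (sq_nonneg R),
    mul_le_mul_of_nonneg_left hRb (by linarith : 0 ≤ R),
    mul_nonneg (mul_nonneg r.cast_nonneg Real.pi_pos.le) (by linarith : 0 ≤ R - 1)]

/-- The infimum of `|log f(R e^{iθ})|` over the quarter circle
`θ ∈ [0, π/2]` tends to infinity as `R → ∞`. -/
theorem genus2log_inf_quarter_circle_tendsto (r : ℕ) (a b : ℝ) (lam : ℕ → ℝ)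
    (hpos : ∀ k, 0 < lam k) (hmono : Monotone lam)
    (hdiv : ¬ Summable (fun k => 1 / lam k ^ 2))
    (hsum : Summable (fun k => 1 / lam k ^ 3)) :
    Tendsto (fun R : ℝ =>
        ⨅ θ : Set.Icc (0 : ℝ) (Real.pi / 2),
          ‖genus2log r a b lam ((R : ℂ) * Complex.exp ((θ : ℝ) * I))‖)
      atTop atTop :=
  genus2log_inf_quarter_circle_tendsto_general r a b lam hpos hdiv hsum
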